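/- Apply the dqd transform (shift 0) to a positive upper bidiagonal matrix B with intermediate values d_1,…,d_n, producing bidiagonal hat{B} with B·Bᵀ = hat{B}ᵀ·hat{B}. Then σ_min(hat{B})² ≤ min_k d_k, where σ_min denotes the smallest singular value. -/

import Mathlib

/-!
Write `B` for the bidiagonal matrix, so that `B̂ᵀ B̂ = B Bᵀ`. Since column `k+1` of `B` is
`a_{k+1} e_{k+1} + b_k e_k`, the solutions of `B u⁽ᵏ⁾ = e_k` satisfy
`u⁽ᵏ⁺¹⁾ = (e_{k+1} - b_k u⁽ᵏ⁾) / a_{k+1}`, hence `‖u⁽ᵏ⁺¹⁾‖² = (1 + b_k² ‖u⁽ᵏ⁾‖²) / a_{k+1}²`: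
this is the dqd recurrence for `1 / d_k`, so `‖u⁽ᵏ⁾‖² = 1 / d_k`. For `x = B⁻ᵀ u⁽ᵏ⁾` we get
`xᵀ B Bᵀ x = ‖u⁽ᵏ⁾‖²` and `x_k = ⟨x, B u⁽ᵏ⁾⟩ = ‖u⁽ᵏ⁾‖²`, so the Rayleigh quotient of `x` is at
most `‖u⁽ᵏ⁾‖² / ‖u⁽ᵏ⁾‖⁴ = d_k`.
-/

open Matrix

/-- The `n×n` upper bidiagonal matrix with diagonal `a` and superdiagonal `b`. -/
def upperBidiagonal (n : ℕ) (a b : ℕ → ℝ) : Matrix (Fin n) (Fin n) ℝ :=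
  Matrix.of fun i j => if (j : ℕ) = (i : ℕ) then a i
    else if (j : ℕ) = (i : ℕ) + 1 then b i else 0

namespace Matrix.IsHermitian

variable {ι : Type*} [Fintype ι] [DecidableEq ι] {A : Matrix ι ι ℝ}

theorem iInf_eigenvalues_mul_dotProduct_self_le (hA : A.IsHermitian) (x : ι → ℝ) :
    (⨅ i, hA.eigenvalues i) * (x ⬝ᵥ x) ≤ x ⬝ᵥ (A *ᵥ x) := by
  set U : Matrix ι ι ℝ := (hA.eigenvectorUnitary : Matrix ι ι ℝ)
  set y := Uᵀ *ᵥ x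
  have hUUt : U * Uᵀ = 1 := by
    simpa [U, star_eq_conjTranspose] using mem_unitaryGroup_iff.mp hA.eigenvectorUnitary.2
  have hdot : ∀ v, x ⬝ᵥ (U *ᵥ v) = y ⬝ᵥ v := fun v => by
    rw [dotProduct_mulVec, ← mulVec_transpose]
  have hxx : x ⬝ᵥ x = y ⬝ᵥ y := by
    rw [← hdot, mulVec_mulVec, hUUt, one_mulVec]
  have hAx : x ⬝ᵥ (A *ᵥ x) = ∑ i, hA.eigenvalues i * y i ^ 2 := by
    have hA' : A = U * diagonal hA.eigenvalues * Uᵀ := by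
      conv_lhs => rw [hA.spectral_theorem]
      simp [U, Unitary.conjStarAlgAut_apply, star_eq_conjTranspose]
    conv_lhs => rw [hA']
    rw [← mulVec_mulVec, ← mulVec_mulVec, hdot, dotProduct]
    exact Finset.sum_congr rfl fun i _ => by rw [mulVec_diagonal]; ring
  rw [hxx, hAx, dotProduct, Finset.mul_sum]
  refine Finset.sum_le_sum fun i _ => ?_
  rw [← sq]
  exact mul_le_mul_of_nonneg_right (ciInf_le (Finite.bddBelow_range hA.eigenvalues) i)
    (sq_nonneg (y i))

theorem iInf_eigenvalues_mul_dotProduct_le_one {B : Matrix ι ι ℝ} (hB : IsUnit B.det)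
    (hAB : A = B * Bᵀ) (hA : A.IsHermitian) {u : ι → ℝ} {k : ι}
    (hu : B *ᵥ u = Pi.single k 1) :
    (⨅ i, hA.eigenvalues i) * (u ⬝ᵥ u) ≤ 1 := by
  set x := (Bᵀ)⁻¹ *ᵥ u
  have hx : Bᵀ *ᵥ x = u := by
    rw [mulVec_mulVec, mul_nonsing_inv _ (by rwa [det_transpose]), one_mulVec]
  have hquad : x ⬝ᵥ (A *ᵥ x) = u ⬝ᵥ u := by
    rw [hAB, ← mulVec_mulVec, hx, dotProduct_mulVec, ← mulVec_transpose, hx]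
  have hxk : x k = u ⬝ᵥ u := by
    rw [← dotProduct_single_one x k, ← hu, dotProduct_mulVec, ← mulVec_transpose, hx]
  have hxx : x k ^ 2 ≤ x ⬝ᵥ x := by
    rw [sq]
    exact Finset.single_le_sum (f := fun i => x i * x i) (fun i _ => mul_self_nonneg (x i))
      (Finset.mem_univ k)
  have hray := hA.iInf_eigenvalues_mul_dotProduct_self_le x
  have hu0 : 0 ≤ u ⬝ᵥ u := Finset.sum_nonneg fun i _ => mul_self_nonneg (u i)
  rw [hquad] at hray
  rw [hxk] at hxx
  set m := ⨅ i, hA.eigenvalues i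
  rcases le_or_gt m 0 with hneg | hpos
  · nlinarith
  have hs : m * (u ⬝ᵥ u) ^ 2 ≤ u ⬝ᵥ u := (mul_le_mul_of_nonneg_left hxx hpos.le).trans hray
  by_contra! h
  have hs_pos : 0 < u ⬝ᵥ u := pos_of_mul_pos_right (one_pos.trans h) hpos.le
  nlinarith

end Matrix.IsHermitian

section upperBidiagonal

variable {n : ℕ} {a b d : ℕ → ℝ}

theorem upperBidiagonal_isUpperTriangular : (upperBidiagonal n a b).IsUpperTriangular :=
  fun i j hji => by
    have : (j : ℕ) < i := hji
    simp only [upperBidiagonal, of_apply]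
    rw [if_neg (by omega), if_neg (by omega)]

theorem det_upperBidiagonal : (upperBidiagonal n a b).det = ∏ i : Fin n, a i := by
  rw [det_of_isUpperTriangular upperBidiagonal_isUpperTriangular]
  simp [upperBidiagonal]

theorem upperBidiagonal_mulVec_single_of_val_eq_zero {j : Fin n} (hj : (j : ℕ) = 0) :
    upperBidiagonal n a b *ᵥ Pi.single j 1 = a j • Pi.single j 1 := by
  ext l
  simp only [mulVec_single_one, col_apply, upperBidiagonal, of_apply, Pi.smul_apply,
    Pi.single_apply, Fin.ext_iff, smul_eq_mul, mul_ite]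
  grind

theorem upperBidiagonal_mulVec_single_of_val_eq_succ {i j : Fin n} (hij : (j : ℕ) = i + 1) :
    upperBidiagonal n a b *ᵥ Pi.single j 1 = a j • Pi.single j 1 + b i • Pi.single i 1 := by
  ext l
  simp only [mulVec_single_one, col_apply, upperBidiagonal, of_apply, Pi.add_apply,
    Pi.smul_apply, Pi.single_apply, Fin.ext_iff, smul_eq_mul, mul_ite, mul_one, mul_zero]
  grind

theorem dqd_pos (ha : ∀ k < n, a k ≠ 0) (hd₀ : d 0 = a 0 ^ 2)
    (hd : ∀ k, k + 1 < n → d (k + 1) = d k * a (k + 1) ^ 2 / (d k + b k ^ 2)) :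
    ∀ k < n, 0 < d k := by
  intro k
  induction k with
  | zero =>
    intro hk
    have := ha 0 hk
    rw [hd₀]
    positivity
  | succ k ih =>
    intro hk
    have := ih (by omega)
    have := ha (k + 1) hk
    rw [hd k hk]
    positivity

theorem exists_upperBidiagonal_mulVec_eq_single (ha : ∀ k < n, a k ≠ 0) (hd₀ : d 0 = a 0 ^ 2)
    (hd : ∀ k, k + 1 < n → d (k + 1) = d k * a (k + 1) ^ 2 / (d k + b k ^ 2)) :
    ∀ k (hk : k < n), ∃ u : Fin n → ℝ, upperBidiagonal n a b *ᵥ u = Pi.single ⟨k, hk⟩ 1 ∧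
      u ⬝ᵥ u = (d k)⁻¹ ∧ ∀ j : Fin n, k < j → u j = 0 := by
  intro k
  induction k with
  | zero =>
    intro hk
    refine ⟨(a 0)⁻¹ • Pi.single ⟨0, hk⟩ 1, ?_, ?_, ?_⟩
    · rw [mulVec_smul, upperBidiagonal_mulVec_single_of_val_eq_zero rfl, smul_smul,
        inv_mul_cancel₀ (ha 0 hk), one_smul]
    · simp [hd₀, sq]
    · intro j hj
      have hj0 : (j : ℕ) ≠ 0 := by omega
      simp [Fin.ext_iff, hj0]
  | succ k ih =>
    intro hk
    obtain ⟨u, hBu, huu, hu⟩ := ih (by omega)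
    have hdk := dqd_pos ha hd₀ hd k (by omega)
    have hak := ha (k + 1) hk
    have hu_succ : Pi.single ⟨k + 1, hk⟩ 1 ⬝ᵥ u = 0 := by
      rw [single_one_dotProduct]
      exact hu _ (Nat.lt_succ_self k)
    refine ⟨(a (k + 1))⁻¹ • (Pi.single ⟨k + 1, hk⟩ 1 - b k • u), ?_, ?_, ?_⟩
    · rw [mulVec_smul, mulVec_sub, mulVec_smul, hBu,
        upperBidiagonal_mulVec_single_of_val_eq_succ (i := ⟨k, by omega⟩) rfl,
        add_sub_cancel_right, smul_smul, inv_mul_cancel₀ hak, one_smul]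
    · simp only [dotProduct_smul, smul_dotProduct, dotProduct_sub, sub_dotProduct, hu_succ,
        dotProduct_comm u, huu, hd k hk]
      simp only [dotProduct_single, Pi.single_eq_same, mul_one, smul_eq_mul, mul_zero, sub_zero,
        zero_sub, mul_neg, sub_neg_eq_add, inv_div]
      field_simp
    · intro j hj
      have hj_succ : (j : ℕ) ≠ k + 1 := by omega
      simp [Fin.ext_iff, hu j (by omega), hj_succ]

end upperBidiagonal

theorem dqd_smallest_singular_le_d_general (n : ℕ) (a b d : ℕ → ℝ)
    (Bhat : Matrix (Fin n) (Fin n) ℝ)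
    (ha : ∀ k < n, 0 < a k)
    (hd1 : d 0 = (a 0) ^ 2)
    (hdk : ∀ k, k + 1 < n → d (k + 1) = d k * (a (k + 1)) ^ 2 / (d k + (b k) ^ 2))
    (hBhat : upperBidiagonal n a b * (upperBidiagonal n a b)ᵀ = Bhatᵀ * Bhat)
    (hM : (Bhatᵀ * Bhat).IsHermitian) :
    ∀ k < n, (⨅ i, hM.eigenvalues i) ≤ d k := by
  intro k hk
  have ha₀ : ∀ k < n, a k ≠ 0 := fun k hk => (ha k hk).ne'
  obtain ⟨u, hBu, huu, -⟩ := exists_upperBidiagonal_mulVec_eq_single ha₀ hd1 hdk k hk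
  have hdet : IsUnit (upperBidiagonal n a b).det := by
    rw [det_upperBidiagonal]
    exact isUnit_iff_ne_zero.mpr (Finset.prod_ne_zero_iff.mpr fun i _ => ha₀ i i.isLt)
  have h := hM.iInf_eigenvalues_mul_dotProduct_le_one hdet hBhat.symm hBu
  rwa [huu, mul_inv_le_iff₀ (dqd_pos ha₀ hd1 hdk k hk), one_mul] at h

/-- After one dqd transform (`B*Bᵀ = B̂ᵀ*B̂`), the square of the smallest singular
value of `B̂` is at most every intermediate value `d_k`. -/
theorem dqd_smallest_singular_le_d (n : ℕ) (hn : 0 < n) (a b d : ℕ → ℝ)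
    (Bhat : Matrix (Fin n) (Fin n) ℝ)
    (ha : ∀ k < n, 0 < a k) (hb : ∀ k, k + 1 < n → 0 < b k)
    (hd1 : d 0 = (a 0) ^ 2)
    (hdk : ∀ k, k + 1 < n → d (k + 1) = d k * (a (k + 1)) ^ 2 / (d k + (b k) ^ 2))
    (hBhat : upperBidiagonal n a b * (upperBidiagonal n a b)ᵀ = Bhatᵀ * Bhat)
    (hM : (Bhatᵀ * Bhat).IsHermitian) :
    ∀ k < n, (⨅ i, hM.eigenvalues i) ≤ d k :=
  dqd_smallest_singular_le_d_general n a b d Bhat ha hd1 hdk hBhat hM
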